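/- Let x be a complex number with |x| > 16. Then ∑_{k=0}^∞ (C(2k,k)²/x^k)·(2H_{2k} − H_k) = (1/2)·log(x/(x−16)) · ∑_{k=0}^∞ C(2k,k)²/x^k, both series being convergent. -/

import Mathlib

/-- The `n`-th harmonic number `H_n = ∑_{i=1}^n 1/i`. -/
noncomputable def harm (n : ℕ) : ℝ := ∑ i ∈ Finset.range n, 1 / (i + 1 : ℝ)

noncomputable def Bc (k : ℕ) : ℝ := ((2 * k).choose k : ℝ) ^ 2
noncomputable def ell (n : ℕ) : ℝ := 16 ^ n / (2 * (n : ℝ))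
noncomputable def Sc (k : ℕ) : ℝ := ∑ j ∈ Finset.range (k + 1), ell (k - j) * Bc j

lemma Bc_central (k : ℕ) : Bc k = (Nat.centralBinom k : ℝ) ^ 2 := rfl

lemma Bc_succ (k : ℕ) : ((k : ℝ) + 1) ^ 2 * Bc (k + 1) = 4 * (2 * k + 1) ^ 2 * Bc k := by
  have h := Nat.succ_mul_centralBinom_succ k
  have h2 : ((k + 1) * Nat.centralBinom (k + 1) : ℝ) = (2 * (2 * k + 1) * Nat.centralBinom k : ℝ) := by
    exact_mod_cast congrArg (Nat.cast : ℕ → ℝ) h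
  have := congrArg (fun y : ℝ => y ^ 2) h2
  simp only [Bc_central]
  push_cast at this ⊢
  nlinarith [this]

lemma Bc_nonneg (k : ℕ) : 0 ≤ Bc k := sq_nonneg _

lemma centralBinom_le (k : ℕ) : Nat.centralBinom k ≤ 4 ^ k := by
  induction k with
  | zero => simp [Nat.centralBinom]
  | succ n ih =>
    have h := Nat.succ_mul_centralBinom_succ n
    have : (n + 1) * Nat.centralBinom (n + 1) ≤ (n + 1) * 4 ^ (n + 1) := by
      rw [h]
      calc 2 * (2 * n + 1) * Nat.centralBinom n ≤ 2 * (2 * n + 2) * 4 ^ n := by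
            exact Nat.mul_le_mul (by omega) ih
        _ = (n + 1) * 4 ^ (n + 1) := by ring
    exact Nat.le_of_mul_le_mul_left this (Nat.succ_pos n)

lemma Bc_le (k : ℕ) : Bc k ≤ 16 ^ k := by
  rw [Bc_central]
  have h : (Nat.centralBinom k : ℝ) ≤ 4 ^ k := by exact_mod_cast centralBinom_le k
  have h0 : (0:ℝ) ≤ Nat.centralBinom k := Nat.cast_nonneg _
  calc (Nat.centralBinom k : ℝ) ^ 2 ≤ ((4:ℝ) ^ k) ^ 2 := by
        apply pow_le_pow_left₀ h0 h
    _ = 16 ^ k := by rw [← pow_mul, mul_comm, pow_mul]; norm_num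

lemma harm_succ (n : ℕ) : harm (n + 1) = harm n + 1 / (n + 1 : ℝ) := by
  simp [harm, Finset.sum_range_succ]

lemma harm_nonneg (n : ℕ) : 0 ≤ harm n := by
  apply Finset.sum_nonneg; intro i _; positivity

lemma harm_mono {m n : ℕ} (h : m ≤ n) : harm m ≤ harm n := by
  apply Finset.sum_le_sum_of_subset_of_nonneg (Finset.range_subset_range.2 h)
  intro i _ _; positivity

lemma harm_le (n : ℕ) : harm n ≤ n := by
  calc harm n ≤ ∑ i ∈ Finset.range n, (1:ℝ) := by
        apply Finset.sum_le_sum; intro i _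
        rw [div_le_one (by positivity)]; linarith [Nat.cast_nonneg (α := ℝ) i]
    _ = n := by simp

lemma t_succ (k : ℕ) :
    2 * harm (2 * (k + 1)) - harm (k + 1) =
      (2 * harm (2 * k) - harm k) + 2 / (2 * (k : ℝ) + 1) := by
  have h1 : 2 * (k + 1) = 2 * k + 1 + 1 := by ring
  rw [h1, harm_succ, harm_succ, harm_succ]
  push_cast
  have h2 : (2 * (k:ℝ) + 1) ≠ 0 := by positivity
  have h3 : (2 * (k:ℝ) + 1 + 1) ≠ 0 := by positivity
  have h4 : ((k:ℝ) + 1) ≠ 0 := by positivity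
  field_simp
  ring

lemma ell_zero : ell 0 = 0 := by simp [ell]

lemma ell_one : ell 1 = 8 := by norm_num [ell]

lemma step_id (j m : ℕ) :
    (((j:ℝ) + m + 2) ^ 2 * ell (m + 2) - 4 * (2 * ((j:ℝ) + m + 1) + 1) ^ 2 * ell (m + 1)) * Bc j
      = (-8) * 16 ^ m * Bc (j + 1) * ((j : ℝ) + 1) ^ 2 / ((m : ℝ) + 1)
        - (-8) * 16 ^ (m + 1) * Bc j * (j : ℝ) ^ 2 / ((m : ℝ) + 2) := by
  have hj : ((j : ℝ) + 1) ^ 2 ≠ 0 := by positivity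
  have hB : Bc (j + 1) = 4 * (2 * (j:ℝ) + 1) ^ 2 * Bc j / ((j : ℝ) + 1) ^ 2 := by
    field_simp
    linarith [Bc_succ j]
  rw [hB]
  simp only [ell]
  have h1 : (2 * ((m:ℝ) + 2)) ≠ 0 := by positivity
  have h2 : (2 * ((m:ℝ) + 1)) ≠ 0 := by positivity
  have h3 : ((m:ℝ) + 1) ≠ 0 := by positivity
  have h4 : ((m:ℝ) + 2) ≠ 0 := by positivity
  push_cast
  field_simp
  ring

lemma Sc_rec (k : ℕ) :
    ((k : ℝ) + 1) ^ 2 * Sc (k + 1) = 4 * (2 * k + 1) ^ 2 * Sc k + 8 * (2 * k + 1) * Bc k := by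
  set T : ℕ → ℝ := fun j => (-8) * 16 ^ (k - j) * Bc j * (j : ℝ) ^ 2 / (((k - j : ℕ) : ℝ) + 1)
    with hT
  have hS1 : Sc (k + 1) = ∑ j ∈ Finset.range (k + 1), ell (k + 1 - j) * Bc j := by
    rw [Sc, Finset.sum_range_succ]
    simp [ell_zero]
  have key : ((k : ℝ) + 1) ^ 2 * Sc (k + 1) - 4 * (2 * k + 1) ^ 2 * Sc k
      = ∑ j ∈ Finset.range (k + 1),
          (((k : ℝ) + 1) ^ 2 * ell (k + 1 - j) - 4 * (2 * (k:ℝ) + 1) ^ 2 * ell (k - j)) * Bc j := by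
    rw [hS1, Sc, Finset.mul_sum, Finset.mul_sum, ← Finset.sum_sub_distrib]
    apply Finset.sum_congr rfl
    intro j _
    ring
  have split : ∑ j ∈ Finset.range (k + 1),
        (((k : ℝ) + 1) ^ 2 * ell (k + 1 - j) - 4 * (2 * (k:ℝ) + 1) ^ 2 * ell (k - j)) * Bc j
      = (∑ j ∈ Finset.range k,
          (((k : ℝ) + 1) ^ 2 * ell (k + 1 - j) - 4 * (2 * (k:ℝ) + 1) ^ 2 * ell (k - j)) * Bc j)
        + 8 * ((k:ℝ) + 1) ^ 2 * Bc k := by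
    rw [Finset.sum_range_succ]
    have e : k + 1 - k = 1 := by omega
    rw [e, Nat.sub_self, ell_one, ell_zero]
    ring
  have tele : ∑ j ∈ Finset.range k,
        (((k : ℝ) + 1) ^ 2 * ell (k + 1 - j) - 4 * (2 * (k:ℝ) + 1) ^ 2 * ell (k - j)) * Bc j
      = T k - T 0 := by
    rw [← Finset.sum_range_sub T]
    apply Finset.sum_congr rfl
    intro j hj
    have hjk : j < k := Finset.mem_range.mp hj
    obtain ⟨m, hm⟩ : ∃ m, k = j + m + 1 := ⟨k - j - 1, by omega⟩
    subst hm
    have e1 : j + m + 1 + 1 - j = m + 2 := by omega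
    have e2 : j + m + 1 - j = m + 1 := by omega
    have e3 : j + m + 1 - (j + 1) = m := by omega
    rw [e1, e2]
    simp only [hT, e2, e3]
    have := step_id j m
    push_cast at this ⊢
    linear_combination this
  have hTk : T k = -8 * (k:ℝ)^2 * Bc k := by
    simp only [hT, Nat.sub_self]
    norm_num
    ring
  have hT0 : T 0 = 0 := by simp [hT]
  have main : ((k : ℝ) + 1) ^ 2 * Sc (k + 1) - 4 * (2 * k + 1) ^ 2 * Sc k
      = -8 * (k:ℝ)^2 * Bc k + 8 * ((k:ℝ) + 1) ^ 2 * Bc k := by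
    rw [key, split, tele, hTk, hT0]; ring
  linear_combination main

lemma Sc_eq (k : ℕ) : Sc k = Bc k * (2 * harm (2 * k) - harm k) := by
  induction k with
  | zero => simp [Sc, ell_zero, harm]
  | succ k ih =>
    have h1 := Sc_rec k
    have hB := Bc_succ k
    have ht := t_succ k
    have h2 : ((k:ℝ) + 1) ^ 2 ≠ 0 := by positivity
    have hne : (2 * (k:ℝ) + 1) ≠ 0 := by positivity
    apply mul_left_cancel₀ h2
    rw [h1, ih]
    have ht2 : (2 * (k:ℝ) + 1) * (2 * harm (2 * (k + 1)) - harm (k + 1))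
        = (2 * (k:ℝ) + 1) * (2 * harm (2 * k) - harm k) + 2 := by
      rw [ht]; field_simp
    linear_combination (-(2 * harm (2 * (k+1)) - harm (k+1))) * hB
      - 4 * (2 * (k:ℝ) + 1) * Bc k * ht2

lemma ell_nonneg (n : ℕ) : 0 ≤ ell n := by
  unfold ell; positivity

lemma ell_le (n : ℕ) : ell n ≤ 16 ^ n := by
  cases n with
  | zero => simp [ell]
  | succ m =>
    unfold ell
    apply div_le_self (by positivity)
    have h := Nat.cast_nonneg (α := ℝ) m
    push_cast
    linarith

theorem stmt_8 (x : ℂ) (hx : ‖x‖ > 16) :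
    Summable (fun k : ℕ => (((Nat.choose (2 * k) k : ℝ) ^ 2 : ℝ) : ℂ) / x ^ k * ((2 * harm (2 * k) - harm k : ℝ) : ℂ)) ∧
    Summable (fun k : ℕ => (((Nat.choose (2 * k) k : ℝ) ^ 2 : ℝ) : ℂ) / x ^ k) ∧
    ∑' k : ℕ, (((Nat.choose (2 * k) k : ℝ) ^ 2 : ℝ) : ℂ) / x ^ k * ((2 * harm (2 * k) - harm k : ℝ) : ℂ) =
      (1 / 2 : ℂ) * Complex.log (x / (x - 16)) * ∑' k : ℕ, (((Nat.choose (2 * k) k : ℝ) ^ 2 : ℝ) : ℂ) / x ^ k := by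
  have hx0 : x ≠ 0 := by
    intro h; rw [h] at hx; simp at hx; linarith
  have habs : (0:ℝ) < ‖x‖ := norm_pos_iff.mpr hx0
  set r : ℝ := 16 / ‖x‖ with hr
  have hr0 : 0 ≤ r := by positivity
  have hr1 : r < 1 := by rw [hr, div_lt_one habs]; exact hx
  set f : ℕ → ℂ := fun n => ((ell n : ℝ) : ℂ) / x ^ n with hfdef
  set g : ℕ → ℂ := fun k => ((Bc k : ℝ) : ℂ) / x ^ k with hgdef
  -- norm bounds
  have hgn : ∀ k, ‖g k‖ ≤ r ^ k := by
    intro k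
    have : ‖g k‖ = Bc k / ‖x‖ ^ k := by
      simp [hgdef, norm_div, Complex.norm_real, abs_of_nonneg (Bc_nonneg k),
        map_pow]
    rw [this, hr, div_pow]
    gcongr
    exact Bc_le k
  have hfn : ∀ n, ‖f n‖ ≤ r ^ n := by
    intro n
    have : ‖f n‖ = ell n / ‖x‖ ^ n := by
      simp [hfdef, norm_div, Complex.norm_real, abs_of_nonneg (ell_nonneg n),
        map_pow]
    rw [this, hr, div_pow]
    gcongr
    exact ell_le n
  have hgeo : Summable (fun k : ℕ => r ^ k) := summable_geometric_of_lt_one hr0 hr1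
  have hgs : Summable (fun k => ‖g k‖) :=
    Summable.of_nonneg_of_le (fun k => norm_nonneg _) hgn hgeo
  have hfs : Summable (fun n => ‖f n‖) :=
    Summable.of_nonneg_of_le (fun n => norm_nonneg _) hfn hgeo
  -- bound on harmonic factor
  have htb : ∀ k : ℕ, |2 * harm (2 * k) - harm k| ≤ 4 * k := by
    intro k
    have h1 : harm k ≤ harm (2 * k) := harm_mono (by omega)
    have h2 : 0 ≤ harm k := harm_nonneg k
    have h3 : harm (2 * k) ≤ (2 * k : ℕ) := harm_le (2 * k)
    rw [abs_le]
    push_cast at h3 ⊢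
    constructor <;> nlinarith [harm_nonneg (2 * k)]
  set c : ℕ → ℂ := fun k => g k * ((2 * harm (2 * k) - harm k : ℝ) : ℂ) with hcdef
  have hcs : Summable (fun k => ‖c k‖) := by
    apply Summable.of_nonneg_of_le (fun k => norm_nonneg _) (f := fun k : ℕ => 4 * ((k:ℝ) ^ 1 * r ^ k))
    · intro k
      have : ‖c k‖ = ‖g k‖ * |2 * harm (2 * k) - harm k| := by
        rw [hcdef]
        rw [norm_mul, Complex.norm_real, Real.norm_eq_abs]
      rw [this]
      calc ‖g k‖ * |2 * harm (2 * k) - harm k| ≤ r ^ k * (4 * k) :=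
            mul_le_mul (hgn k) (htb k) (abs_nonneg _) (by positivity)
        _ = 4 * ((k:ℝ) ^ 1 * r ^ k) := by ring
    · apply Summable.mul_left
      have := summable_pow_mul_geometric_of_norm_lt_one (R := ℝ) 1 (r := r)
        (by rwa [Real.norm_eq_abs, abs_of_nonneg hr0])
      exact this
  -- log series
  have hz1 : ‖(16:ℂ) / x‖ < 1 := by
    rw [norm_div]
    simpa [Complex.norm_ofNat] using hr1
  have hlog := Complex.hasSum_taylorSeries_neg_log hz1
  have hfe : ∀ n : ℕ, f n = (1 / 2 : ℂ) * (((16:ℂ) / x) ^ n / n) := by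
    intro n
    cases n with
    | zero => simp [hfdef, ell_zero]
    | succ m =>
      have hm : ((m:ℂ) + 1) ≠ 0 := by
        have h1 : ((m + 1 : ℕ) : ℂ) ≠ 0 := Nat.cast_ne_zero.mpr (Nat.succ_ne_zero m)
        push_cast at h1; exact h1
      have hxp : x ^ (m + 1) ≠ 0 := pow_ne_zero _ hx0
      simp only [hfdef, ell, div_pow]
      push_cast
      field_simp
  have hF : HasSum f ((1 / 2 : ℂ) * -Complex.log (1 - 16 / x)) := by
    have := hlog.mul_left (1 / 2 : ℂ)
    rw [show f = fun n : ℕ => (1 / 2 : ℂ) * (((16:ℂ) / x) ^ n / n) from funext hfe]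
    exact this
  -- identify the log
  have hre : (0:ℝ) < (1 - 16 / x).re := by
    have h1 : ((16:ℂ) / x).re ≤ ‖(16:ℂ) / x‖ := Complex.re_le_norm _
    have h2 : ‖(16:ℂ) / x‖ = r := by
      rw [norm_div]
      simp [hr, Complex.norm_ofNat]
    simp only [Complex.sub_re, Complex.one_re, Complex.div_re] at *
    rw [h2] at h1
    linarith
  have harg : (1 - 16 / x).arg ≠ Real.pi := by
    intro h
    have := (Complex.arg_eq_pi_iff.mp h).1
    linarith
  have hloginv : Complex.log (x / (x - 16)) = -Complex.log (1 - 16 / x) := by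
    have h16 : (1:ℂ) - 16 / x = (x - 16) / x := by field_simp
    have hinv : x / (x - 16) = ((1:ℂ) - 16 / x)⁻¹ := by
      rw [h16, inv_div]
    rw [hinv, Complex.log_inv _ harg]
  have hfsum : ∑' n, f n = (1 / 2 : ℂ) * Complex.log (x / (x - 16)) := by
    rw [hF.tsum_eq, hloginv]
  -- Cauchy product
  have hcp := tsum_mul_tsum_eq_tsum_sum_antidiagonal_of_summable_norm hfs hgs
  have hdiag : ∀ n : ℕ, ∑ kl ∈ Finset.HasAntidiagonal.antidiagonal n, f kl.1 * g kl.2 = c n := by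
    intro n
    rw [Finset.Nat.sum_antidiagonal_eq_sum_range_succ_mk]
    have step1 : ∀ i ∈ Finset.range (n + 1),
        f i * g (n - i) = ((ell i * Bc (n - i) : ℝ) : ℂ) / x ^ n := by
      intro i hi
      have hin : i ≤ n := by
        have := Finset.mem_range.mp hi; omega
      simp only [hfdef, hgdef]
      rw [div_mul_div_comm, ← pow_add]
      have : i + (n - i) = n := by omega
      rw [this]
      push_cast
      ring
    rw [Finset.sum_congr rfl step1, ← Finset.sum_div]
    have hrefl : ∑ i ∈ Finset.range (n + 1), (((ell i * Bc (n - i) : ℝ) : ℂ))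
        = ((Sc n : ℝ) : ℂ) := by
      rw [← Complex.ofReal_sum]
      congr 1
      rw [Sc, ← Finset.sum_range_reflect]
      apply Finset.sum_congr rfl
      intro i hi
      have hin : i ≤ n := by
        have := Finset.mem_range.mp hi; omega
      have e1 : n + 1 - 1 - i = n - i := by omega
      have e2 : n - (n - i) = i := by omega
      rw [e1, e2]
    rw [hrefl, Sc_eq]
    simp only [hcdef, hgdef]
    push_cast
    ring
  have hcsum : ∑' k, c k = ((1 / 2 : ℂ) * Complex.log (x / (x - 16))) * ∑' k, g k := by
    rw [← hfsum, hcp]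
    exact tsum_congr fun n => (hdiag n).symm
  refine ⟨?_, ?_, ?_⟩
  · have := hcs.of_norm
    simpa [hcdef, hgdef, Bc] using this
  · have := hgs.of_norm
    simpa [hgdef, Bc] using this
  · have h1 := hcsum
    simp only [hcdef, hgdef, Bc] at h1
    convert h1 using 2
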